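/- Let Y be a finite set with probability mass functions π_θ and π_ref, both strictly positive, and reward r : Y → ℝ bounded with |r| ≤ M. Suppose π_ref(y) ≥ C₂ > 0 for all y. Then the expected reward J(θ) = ∑_y π_θ(y) r(y) satisfies J(θ) ≥ ∑_{y: r(y)>0} π_ref(y) r(y) log π_θ(y) + (1/C₂) ∑_{y: r(y)<0} π_ref(y) r(y) π_θ(y) + C₁, where C₁ = ∑_{y: r(y)>0} π_ref(y) r(y) (1 − log π_ref(y)). -/
import Mathlib


theorem reward_lower_bound_maximization {Y : Type*} [Fintype Y]
    (r πref πθ : Y → ℝ) (M C₂ : ℝ) (hC₂ : 0 < C₂)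
    (href_pos : ∀ y, 0 < πref y) (href_sum : ∑ y, πref y = 1)
    (hθ_pos : ∀ y, 0 < πθ y) (hθ_sum : ∑ y, πθ y = 1)
    (hM : ∀ y, |r y| ≤ M)
    (href_lb : ∀ y, C₂ ≤ πref y) :
    ∑ y, πθ y * r y ≥
      (∑ y ∈ Finset.univ.filter (fun y => 0 < r y), πref y * r y * Real.log (πθ y)) +
      (1 / C₂) * (∑ y ∈ Finset.univ.filter (fun y => r y < 0), πref y * r y * πθ y) +
      (∑ y ∈ Finset.univ.filter (fun y => 0 < r y), πref y * r y * (1 - Real.log (πref y))) := by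
  classical
  set P := Finset.univ.filter (fun y => 0 < r y) with hP
  set N := Finset.univ.filter (fun y => r y < 0) with hN
  have hsplit : ∑ y, πθ y * r y = ∑ y ∈ P, πθ y * r y + ∑ y ∈ N, πθ y * r y := by
    have h1 : ∑ y ∈ P, πθ y * r y + ∑ y ∈ Finset.univ.filter (fun y => ¬ 0 < r y), πθ y * r y
        = ∑ y, πθ y * r y := Finset.sum_filter_add_sum_filter_not _ _ _
    have h2 : ∑ y ∈ Finset.univ.filter (fun y => ¬ 0 < r y), πθ y * r y
        = ∑ y ∈ N, πθ y * r y := by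
      symm
      apply Finset.sum_subset
      · intro y hy
        simp only [hN, Finset.mem_filter, Finset.mem_univ, true_and] at hy ⊢
        linarith
      · intro y hy hny
        simp only [hN, Finset.mem_filter, Finset.mem_univ, true_and, not_lt] at hy hny
        have : r y = 0 := le_antisymm hy hny
        simp [this]
    linarith
  have key1 : ∀ y ∈ P,
      πref y * r y * Real.log (πθ y) + πref y * r y * (1 - Real.log (πref y)) ≤ πθ y * r y := by
    intro y hy
    have hr : 0 < r y := (Finset.mem_filter.mp hy).2
    have hθ := hθ_pos y
    have hπ := href_pos y
    have h1 : Real.log (πθ y / πref y) ≤ πθ y / πref y - 1 :=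
      Real.log_le_sub_one_of_pos (div_pos hθ hπ)
    rw [Real.log_div hθ.ne' hπ.ne'] at h1
    have hd : πθ y / πref y * πref y = πθ y := div_mul_cancel₀ _ hπ.ne'
    nlinarith [mul_le_mul_of_nonneg_left h1 (le_of_lt (mul_pos hπ hr)), mul_pos hπ hr]
  have key2 : ∀ y ∈ N, (1 / C₂) * (πref y * r y * πθ y) ≤ πθ y * r y := by
    intro y hy
    have hr : r y < 0 := (Finset.mem_filter.mp hy).2
    have hθ := hθ_pos y
    have hneg : r y * πθ y < 0 := mul_neg_of_neg_of_pos hr hθ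
    have h := mul_le_mul_of_nonpos_right (href_lb y) hneg.le
    have hinv : (0:ℝ) < 1 / C₂ := by positivity
    have hc : (1 / C₂) * C₂ = 1 := one_div_mul_cancel hC₂.ne'
    nlinarith [mul_le_mul_of_nonneg_left h hinv.le]
  have hs1 : ∑ y ∈ P, (πref y * r y * Real.log (πθ y) + πref y * r y * (1 - Real.log (πref y)))
      ≤ ∑ y ∈ P, πθ y * r y := Finset.sum_le_sum key1
  have hs2 : ∑ y ∈ N, (1 / C₂) * (πref y * r y * πθ y) ≤ ∑ y ∈ N, πθ y * r y :=
    Finset.sum_le_sum key2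
  rw [Finset.sum_add_distrib] at hs1
  rw [← Finset.mul_sum] at hs2
  rw [hsplit]
  linarith
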